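/- Let S_{V,1,2} be the linear span of S_V, φ₁ and φ₂ in ℂ² ⊗ ℂ² ⊗ ℂ². Then S_{V,1,2} contains infinitely many distinct one-dimensional subspaces spanned by product vectors; explicitly, for every β ∈ ℂ with β ≠ 0 and β ≠ 1, the product vector (|0⟩ + |1⟩) ⊗ ((β − 1)|0⟩ + |1⟩) ⊗ |0⟩ lies in S_{V,1,2}. In particular, S_{V,1,2} is not a quasi-completely entangled subspace. -/

import Mathlib

noncomputable section

abbrev Q : Type := EuclideanSpace ℂ (Fin 2)
abbrev Q2 : Type := EuclideanSpace ℂ (Fin 2 × Fin 2)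
abbrev Q3 : Type := EuclideanSpace ℂ (Fin 2 × Fin 2 × Fin 2)

/-- standard basis vector of ℂ² -/
def ket2 (i : Fin 2) : Q := EuclideanSpace.single i 1

/-- the state |+⟩ -/
def plus : Q := (Real.sqrt 2 : ℂ)⁻¹ • (ket2 0 + ket2 1)

/-- the state |−⟩ -/
def minus : Q := (Real.sqrt 2 : ℂ)⁻¹ • (ket2 0 - ket2 1)

/-- elementary tensor of three qubit vectors, in ℂ² ⊗ ℂ² ⊗ ℂ² ≅ ℂ⁸ -/
def tp3 (u v w : Q) : Q3 := WithLp.toLp 2 (fun p : Fin 2 × Fin 2 × Fin 2 => u p.1 * v p.2.1 * w p.2.2)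

/-- a product vector in ℂ² ⊗ ℂ² ⊗ ℂ² -/
def IsProd3 (ξ : Q3) : Prop := ∃ u v w : Q, ξ = tp3 u v w

/-- the set of one-dimensional subspaces of `T` spanned by (nonzero) product vectors -/
def prodLines3 (T : Submodule ℂ Q3) : Set (Submodule ℂ Q3) :=
  {L | ∃ ξ : Q3, ξ ≠ 0 ∧ ξ ∈ T ∧ IsProd3 ξ ∧ L = Submodule.span ℂ {ξ}}

/-- a factorized vector across the bipartite cut {1} | {2,3} -/
def cut1 (u : Q) (η : Q2) : Q3 := WithLp.toLp 2 (fun p : Fin 2 × Fin 2 × Fin 2 => u p.1 * η p.2)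

/-- a factorized vector across the bipartite cut {2} | {1,3} -/
def cut2 (u : Q) (η : Q2) : Q3 := WithLp.toLp 2 (fun p : Fin 2 × Fin 2 × Fin 2 => u p.2.1 * η (p.1, p.2.2))

/-- a factorized vector across the bipartite cut {3} | {1,2} -/
def cut3 (u : Q) (η : Q2) : Q3 := WithLp.toLp 2 (fun p : Fin 2 × Fin 2 × Fin 2 => u p.2.2 * η (p.1, p.2.1))

def φ₁ : Q3 := tp3 (ket2 0) (ket2 1) plus
def φ₂ : Q3 := tp3 (ket2 1) plus (ket2 0)
def φ₃ : Q3 := tp3 plus (ket2 0) (ket2 1)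
def φ₄ : Q3 := tp3 minus minus minus

/-- the span of the three-qubit UPB of Bennett et al. -/
def V3 : Submodule ℂ Q3 := Submodule.span ℂ {φ₁, φ₂, φ₃, φ₄}

/-- the orthogonal complement of the span of the three-qubit UPB -/
def SV : Submodule ℂ Q3 := V3ᗮ

/-- the double perturbation of `S_V` by `φ₁` and `φ₂` -/
def SV12 : Submodule ℂ Q3 := SV ⊔ Submodule.span ℂ {φ₁} ⊔ Submodule.span ℂ {φ₂}

/-! Dropping the factors `1/√2` from `|±⟩` turns each `φᵢ` into a nonzero multiple of a vector
`ψᵢ` with coordinates in `{0, ±1}`, so membership in `S_V` becomes four integer-coefficient linear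
equations. For `ξ β = (|0⟩ + |1⟩) ⊗ ((β - 1)|0⟩ + |1⟩) ⊗ |0⟩` the vector `ξ β - ψ₁/2 - (β/2) ψ₂`
satisfies them, so `ξ β ∈ S_V + ℂφ₁ + ℂφ₂`. The lines `ℂ ξ β` are pairwise distinct, because
`ξ β` has coordinate `1` at `|010⟩` and `β - 1` at `|000⟩`. -/

open Submodule

theorem Submodule.mem_orthogonal_span_iff {𝕜 E : Type*} [RCLike 𝕜] [NormedAddCommGroup E]
    [InnerProductSpace 𝕜 E] {s : Set E} {x : E} :
    x ∈ (span 𝕜 s)ᗮ ↔ ∀ y ∈ s, inner 𝕜 y x = 0 := by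
  rw [← span_singleton_le_iff_mem, ← isOrtho_iff_le, isOrtho_comm, isOrtho_span]
  simp

theorem Submodule.eq_of_span_singleton_eq {K M : Type*} [Field K] [AddCommGroup M] [Module K M]
    (f : M →ₗ[K] K) {x y : M} (hf : f x = f y) (hx : f x ≠ 0) (h : K ∙ x = K ∙ y) : x = y := by
  obtain ⟨z, rfl⟩ := span_singleton_eq_span_singleton.mp h
  have hz : (z : K) = 1 := by
    rw [Units.smul_def, map_smul, smul_eq_mul] at hf
    exact mul_eq_right₀ hx |>.mp hf.symm
  simp [Units.smul_def, hz]

theorem tp3_smul_left (c : ℂ) (u v w : Q) : tp3 (c • u) v w = c • tp3 u v w := by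
  ext; simp [tp3]; ring

theorem tp3_smul_middle (c : ℂ) (u v w : Q) : tp3 u (c • v) w = c • tp3 u v w := by
  ext; simp [tp3]; ring

theorem tp3_smul_right (c : ℂ) (u v w : Q) : tp3 u v (c • w) = c • tp3 u v w := by
  ext; simp [tp3]; ring

def ψ₁ : Q3 := tp3 (ket2 0) (ket2 1) (ket2 0 + ket2 1)
def ψ₂ : Q3 := tp3 (ket2 1) (ket2 0 + ket2 1) (ket2 0)
def ψ₃ : Q3 := tp3 (ket2 0 + ket2 1) (ket2 0) (ket2 1)
def ψ₄ : Q3 := tp3 (ket2 0 - ket2 1) (ket2 0 - ket2 1) (ket2 0 - ket2 1)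

theorem φ₁_eq_smul_ψ₁ : φ₁ = (Real.sqrt 2 : ℂ)⁻¹ • ψ₁ := tp3_smul_right _ _ _ _
theorem φ₂_eq_smul_ψ₂ : φ₂ = (Real.sqrt 2 : ℂ)⁻¹ • ψ₂ := tp3_smul_middle _ _ _ _
theorem φ₃_eq_smul_ψ₃ : φ₃ = (Real.sqrt 2 : ℂ)⁻¹ • ψ₃ := tp3_smul_left _ _ _ _
theorem φ₄_eq_smul_ψ₄ : φ₄ = (Real.sqrt 2 : ℂ)⁻¹ ^ 3 • ψ₄ := by
  simp only [φ₄, ψ₄, minus, tp3_smul_left, tp3_smul_middle, tp3_smul_right, smul_smul]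
  ring_nf

theorem mem_SV_iff {x : Q3} : x ∈ SV ↔
    inner ℂ ψ₁ x = 0 ∧ inner ℂ ψ₂ x = 0 ∧ inner ℂ ψ₃ x = 0 ∧ inner ℂ ψ₄ x = 0 := by
  have h2 : (Real.sqrt 2 : ℂ) ≠ 0 := by simp
  simp [SV, V3, mem_orthogonal_span_iff, φ₁_eq_smul_ψ₁, φ₂_eq_smul_ψ₂, φ₃_eq_smul_ψ₃,
    φ₄_eq_smul_ψ₄, inner_smul_left, h2]

def ξ (β : ℂ) : Q3 := tp3 (ket2 0 + ket2 1) ((β - 1) • ket2 0 + ket2 1) (ket2 0)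

theorem ξ_sub_mem_SV (β : ℂ) : ξ β - (1 / 2 : ℂ) • ψ₁ - (β / 2) • ψ₂ ∈ SV := by
  refine mem_SV_iff.mpr ⟨?_, ?_, ?_, ?_⟩ <;>
  · simp only [PiLp.inner_apply, Fintype.sum_prod_type, Fin.sum_univ_two]
    simp [ξ, ψ₁, ψ₂, ψ₃, ψ₄, tp3, ket2] <;> ring

theorem ψ₁_mem_span_φ₁ : ψ₁ ∈ ℂ ∙ φ₁ := by
  rw [φ₁_eq_smul_ψ₁, span_singleton_smul_eq (by simp)]
  exact mem_span_singleton_self ψ₁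

theorem ψ₂_mem_span_φ₂ : ψ₂ ∈ ℂ ∙ φ₂ := by
  rw [φ₂_eq_smul_ψ₂, span_singleton_smul_eq (by simp)]
  exact mem_span_singleton_self ψ₂

theorem ξ_mem_SV12 (β : ℂ) : ξ β ∈ SV12 := by
  have hξ : ξ β = (ξ β - (1 / 2 : ℂ) • ψ₁ - (β / 2) • ψ₂) + (1 / 2 : ℂ) • ψ₁ + (β / 2) • ψ₂ := by
    abel
  rw [hξ, SV12]
  exact add_mem (add_mem (mem_sup_left (mem_sup_left (ξ_sub_mem_SV β)))
    (mem_sup_left (mem_sup_right (smul_mem _ _ ψ₁_mem_span_φ₁))))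
    (mem_sup_right (smul_mem _ _ ψ₂_mem_span_φ₂))

theorem ξ_apply_010 (β : ℂ) : ξ β (0, 1, 0) = 1 := by
  simp [ξ, tp3, ket2]

theorem ξ_apply_000 (β : ℂ) : ξ β (0, 0, 0) = β - 1 := by
  simp [ξ, tp3, ket2]

theorem span_ξ_injective : Function.Injective fun β => ℂ ∙ ξ β := by
  intro a b h
  have hab : ξ a = ξ b := eq_of_span_singleton_eq (EuclideanSpace.proj (0, 1, 0)).toLinearMap
    (by simp [ξ_apply_010]) (by simp [ξ_apply_010]) h
  simpa [ξ_apply_000] using congrArg (· (0, 0, 0)) hab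

theorem statement16 :
    (∀ β : ℂ, β ≠ 0 → β ≠ 1 →
      tp3 (ket2 0 + ket2 1) ((β - 1) • ket2 0 + ket2 1) (ket2 0) ∈ SV12) ∧
    (prodLines3 SV12).Infinite := by
  refine ⟨fun β _ _ => ξ_mem_SV12 β, (Set.infinite_range_of_injective span_ξ_injective).mono ?_⟩
  rintro _ ⟨β, rfl⟩
  have hξ : ξ β ≠ 0 := fun h => by simpa [h] using ξ_apply_010 β
  exact ⟨ξ β, hξ, ξ_mem_SV12 β, ⟨_, _, _, rfl⟩, rfl⟩
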